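/- Let n ≥ 2 and let Λ_1,...,Λ_r be finitely many non-empty subsets of ℤ_{≥0}^n. Then there exist a single finite composition Φ of order-preserving monomial blowing-ups of ℝ^n and vectors a_i ∈ Φ(Λ_i), i = 1,...,r, such that Φ(Λ_i) ⊆ a_i + ℤ_{≥0}^n for every i. -/

import Mathlib

noncomputable section

/-- The monomial blowing-up `φ_{ij}` of `ℝ^n` (for distinct `i`, `j`): the `j`-th
coordinate becomes `a i + a j`, the other coordinates are unchanged. -/
def blowUp (n : ℕ) (i j : Fin n) : (Fin n → ℝ) → (Fin n → ℝ) :=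
  fun a l => if l = j then a i + a j else a l

/-- The monomial blowing-down `φ_{ij}⁻¹` of `ℝ^n`, the inverse of `blowUp n i j`. -/
def blowDown (n : ℕ) (i j : Fin n) : (Fin n → ℝ) → (Fin n → ℝ) :=
  fun a l => if l = j then a l - a i else a l

/-- `Φ` is a finite composition of order-preserving monomial blowing-ups `φ_{ij}`, `i < j`. -/
def IsBlowUpComp (n : ℕ) (Φ : (Fin n → ℝ) → (Fin n → ℝ)) : Prop :=
  ∃ L : List ((Fin n → ℝ) → (Fin n → ℝ)),
    (∀ g ∈ L, ∃ i j : Fin n, i < j ∧ g = blowUp n i j) ∧ Φ = L.foldr (· ∘ ·) id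

/-- `Φ` is a finite composition of order-preserving monomial blowing-downs `φ_{ij}⁻¹`, `i < j`. -/
def IsBlowDownComp (n : ℕ) (Φ : (Fin n → ℝ) → (Fin n → ℝ)) : Prop :=
  ∃ L : List ((Fin n → ℝ) → (Fin n → ℝ)),
    (∀ g ∈ L, ∃ i j : Fin n, i < j ∧ g = blowDown n i j) ∧ Φ = L.foldr (· ∘ ·) id

/-!
Work coordinate by coordinate. Suppose `a ∈ S ⊆ ℕⁿ` is already a lower bound of `S` in the
coordinates `l < j`. Among the points agreeing with `a` there, pick one with least `j`-th
coordinate `K`, and apply `φ_{ij}` `K` times for every `i < j`: this adds `K · ∑_{i<j} b_i` to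
`b_j`. A point that agrees with the chosen one below `j` keeps `b_j ≥ K`; any other point has
`∑_{i<j} b_i` larger by at least `1` (integrality), which outweighs `a_j = K`. After the last
coordinate `Φ(S)` has a least element. Since blowing-ups are monotone, least elements created
for earlier sets survive the blowing-ups made for later ones.
-/

open Finset Function

variable {n : ℕ}

def natPoints (n : ℕ) : Set (Fin n → ℝ) := {v | ∀ l, ∃ m : ℕ, v l = m}

lemma exists_eq_add_natCast_of_le {a b : Fin n → ℝ} (ha : a ∈ natPoints n)
    (hb : b ∈ natPoints n) (hab : a ≤ b) (l : Fin n) : ∃ c : ℕ, b l = a l + c := by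
  obtain ⟨α, hα⟩ := ha l
  obtain ⟨β, hβ⟩ := hb l
  have hαβ : α ≤ β := by
    have := hab l
    rw [hα, hβ] at this
    exact Nat.cast_le.1 this
  exact ⟨β - α, by rw [hα, hβ, Nat.cast_sub hαβ]; ring⟩

lemma exists_forall_le_of_eq_natCast {α : Type*} {T : Set α} (hT : T.Nonempty) (f : α → ℝ)
    (hf : ∀ x ∈ T, ∃ m : ℕ, f x = m) : ∃ x ∈ T, ∀ y ∈ T, f x ≤ f y := by
  let M : Set ℕ := {m | ∃ x ∈ T, f x = m}
  have hM : M.Nonempty := by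
    obtain ⟨x, hx⟩ := hT
    obtain ⟨m, hm⟩ := hf x hx
    exact ⟨m, x, hx, hm⟩
  obtain ⟨x, hx, hxm⟩ := Nat.sInf_mem hM
  refine ⟨x, hx, fun y hy => ?_⟩
  obtain ⟨m, hm⟩ := hf y hy
  have hle : sInf M ≤ m := Nat.sInf_le ⟨y, hy, hm⟩
  rw [hxm, hm]
  exact_mod_cast hle

section BlowUp

variable {i j : Fin n}

lemma blowUp_eq_update (a : Fin n → ℝ) : blowUp n i j a = update a j (a i + a j) := by
  funext l
  simp only [blowUp, update_apply]

lemma blowUp_monotone : Monotone (blowUp n i j) := by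
  intro a b hab l
  simp only [blowUp]
  split
  · exact add_le_add (hab i) (hab j)
  · exact hab l

lemma blowUp_mapsTo_natPoints : Set.MapsTo (blowUp n i j) (natPoints n) (natPoints n) := by
  intro v hv l
  simp only [blowUp]
  split
  · obtain ⟨α, hα⟩ := hv i
    obtain ⟨β, hβ⟩ := hv j
    exact ⟨α + β, by rw [hα, hβ, Nat.cast_add]⟩
  · exact hv l

lemma blowUp_iterate_apply (hij : i ≠ j) (K : ℕ) (a : Fin n → ℝ) :
    (blowUp n i j)^[K] a = update a j (a j + K * a i) := by
  induction K with
  | zero => simp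
  | succ K ih =>
    rw [iterate_succ_apply', ih, blowUp_eq_update, update_idem, update_self,
      update_of_ne hij]
    congr 1
    push_cast
    ring

end BlowUp

lemma List.foldr_comp_eq_comp {α : Type*} (L : List (α → α)) (g : α → α) :
    L.foldr (· ∘ ·) g = L.foldr (· ∘ ·) id ∘ g := by
  induction L with
  | nil => rfl
  | cons f L ih => simp only [List.foldr_cons, ih]; rfl

namespace IsBlowUpComp

protected lemma id : IsBlowUpComp n id := ⟨[], by simp, rfl⟩

lemma of_blowUp {i j : Fin n} (hij : i < j) : IsBlowUpComp n (blowUp n i j) :=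
  ⟨[blowUp n i j], by simpa using ⟨i, j, hij, rfl⟩, by simp⟩

protected lemma comp {Φ Ψ : (Fin n → ℝ) → (Fin n → ℝ)} (hΦ : IsBlowUpComp n Φ)
    (hΨ : IsBlowUpComp n Ψ) : IsBlowUpComp n (Φ ∘ Ψ) := by
  obtain ⟨L, hL, rfl⟩ := hΦ
  obtain ⟨M, hM, rfl⟩ := hΨ
  refine ⟨L ++ M, fun g hg => (List.mem_append.1 hg).elim (hL g) (hM g), ?_⟩
  rw [List.foldr_append]
  exact (L.foldr_comp_eq_comp _).symm

protected lemma iterate {Φ : (Fin n → ℝ) → (Fin n → ℝ)} (hΦ : IsBlowUpComp n Φ) (K : ℕ) :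
    IsBlowUpComp n Φ^[K] := by
  induction K with
  | zero => exact IsBlowUpComp.id
  | succ K ih => rw [iterate_succ']; exact hΦ.comp ih

lemma induction {P : ((Fin n → ℝ) → (Fin n → ℝ)) → Prop} (h_id : P id)
    (h_comp : ∀ (i j : Fin n) Φ, i < j → P Φ → P (blowUp n i j ∘ Φ))
    {Φ : (Fin n → ℝ) → (Fin n → ℝ)} (hΦ : IsBlowUpComp n Φ) : P Φ := by
  obtain ⟨L, hL, rfl⟩ := hΦ
  induction L with
  | nil => exact h_id
  | cons g L ih =>
    obtain ⟨i, j, hij, rfl⟩ := hL g List.mem_cons_self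
    exact h_comp i j _ hij (ih fun g hg => hL g (List.mem_cons_of_mem _ hg))

lemma monotone {Φ : (Fin n → ℝ) → (Fin n → ℝ)} (hΦ : IsBlowUpComp n Φ) : Monotone Φ :=
  hΦ.induction (P := Monotone) monotone_id fun _ _ _ _ hΨ => blowUp_monotone.comp hΨ

lemma mapsTo_natPoints {Φ : (Fin n → ℝ) → (Fin n → ℝ)} (hΦ : IsBlowUpComp n Φ) :
    Set.MapsTo Φ (natPoints n) (natPoints n) :=
  hΦ.induction (P := fun Ψ => Set.MapsTo Ψ (natPoints n) (natPoints n)) (Set.mapsTo_id _)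
    fun _ _ _ _ hΨ => blowUp_mapsTo_natPoints.comp hΨ

lemma image_subset_natPoints {Φ : (Fin n → ℝ) → (Fin n → ℝ)} (hΦ : IsBlowUpComp n Φ)
    {S : Set (Fin n → ℝ)} (hS : S ⊆ natPoints n) : Φ '' S ⊆ natPoints n :=
  (hΦ.mapsTo_natPoints.mono_left hS).image_subset

end IsBlowUpComp

lemma isBlowUpComp_update_add_mul_sum {j : Fin n} (s : Finset (Fin n)) (hs : ∀ i ∈ s, i < j)
    (K : ℕ) :
    IsBlowUpComp n fun a => update a j (a j + K * ∑ i ∈ s, a i) := by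
  classical
  induction s using Finset.induction_on with
  | empty =>
    simp only [sum_empty, mul_zero, add_zero, update_eq_self]
    exact IsBlowUpComp.id
  | insert i s hi ih =>
    have hij : i < j := hs i (mem_insert_self i s)
    convert ((IsBlowUpComp.of_blowUp hij).iterate K).comp
      (ih fun i' hi' => hs i' (mem_insert_of_mem hi')) using 1
    funext a
    rw [comp_apply, blowUp_iterate_apply hij.ne, update_idem, update_self,
      update_of_ne hij.ne, sum_insert hi]
    congr 1
    ring

lemma add_mul_sum_Iio_le {a b : Fin n → ℝ} (ha : a ∈ natPoints n) (hb : b ∈ natPoints n)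
    {j : Fin n} (hlt : ∀ l < j, a l ≤ b l) (hj : (∀ l < j, a l = b l) → a j ≤ b j)
    {K : ℝ} (hK : a j ≤ K) :
    a j + K * ∑ i ∈ Iio j, a i ≤ b j + K * ∑ i ∈ Iio j, b i := by
  obtain ⟨α, hα⟩ := ha j
  obtain ⟨β, hβ⟩ := hb j
  have hK0 : 0 ≤ K := le_trans (by rw [hα]; positivity) hK
  by_cases hagree : ∀ l < j, a l = b l
  · rw [sum_congr rfl fun l hl => hagree l (mem_Iio.1 hl)]
    linarith [hj hagree]
  obtain ⟨l₀, hl₀, hne⟩ := not_forall₂.1 hagree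
  have hgap : 1 ≤ b l₀ - a l₀ := by
    obtain ⟨α₀, hα₀⟩ := ha l₀
    obtain ⟨β₀, hβ₀⟩ := hb l₀
    have hle := hlt l₀ hl₀
    rw [hα₀, hβ₀] at hne hle ⊢
    have : α₀ < β₀ := by exact_mod_cast hle.lt_of_ne hne
    rw [le_sub_iff_add_le']
    exact_mod_cast this
  have hsum : 1 ≤ ∑ i ∈ Iio j, b i - ∑ i ∈ Iio j, a i := by
    rw [← sum_sub_distrib]
    exact hgap.trans (single_le_sum (fun l hl => sub_nonneg.2 (hlt l (mem_Iio.1 hl)))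
      (mem_Iio.2 hl₀))
  have hb0 : 0 ≤ b j := by rw [hβ]; positivity
  nlinarith

lemma exists_isBlowUpComp_lowerBound_Iic {S : Set (Fin n → ℝ)} (hS : S ⊆ natPoints n)
    {a' : Fin n → ℝ} (ha' : a' ∈ S) {j : Fin n} (hlt : ∀ b ∈ S, ∀ l < j, a' l ≤ b l) :
    ∃ Ψ, IsBlowUpComp n Ψ ∧ ∃ a ∈ Ψ '' S, ∀ b ∈ Ψ '' S, ∀ l ≤ j, a l ≤ b l := by
  obtain ⟨a, ⟨haS, ha'a⟩, hmin⟩ := exists_forall_le_of_eq_natCast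
    (T := {b ∈ S | ∀ l < j, a' l = b l}) ⟨a', ha', fun _ _ => rfl⟩ (· j) fun b hb => hS hb.1 j
  have hlt' : ∀ b ∈ S, ∀ l < j, a l ≤ b l := fun b hb l hl =>
    (ha'a l hl).symm.trans_le (hlt b hb l hl)
  obtain ⟨K, hK⟩ := hS haS j
  refine ⟨_, isBlowUpComp_update_add_mul_sum (Iio j) (fun i hi => mem_Iio.1 hi) K,
    _, ⟨a, haS, rfl⟩, ?_⟩
  rintro _ ⟨b, hbS, rfl⟩ l hl
  rcases hl.lt_or_eq with hl | rfl
  · simp only [update_of_ne hl.ne]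
    exact hlt' b hbS l hl
  · simp only [update_self]
    exact add_mul_sum_Iio_le (hS haS) (hS hbS) (hlt' b hbS)
      (fun h => hmin b ⟨hbS, fun l hl => (ha'a l hl).trans (h l hl)⟩) hK.le

lemma exists_isBlowUpComp_lowerBound_lt {S : Set (Fin n → ℝ)} (hne : S.Nonempty)
    (hS : S ⊆ natPoints n) (k : ℕ) :
    ∃ Φ, IsBlowUpComp n Φ ∧ ∃ a ∈ Φ '' S, ∀ b ∈ Φ '' S, ∀ l : Fin n, (l : ℕ) < k → a l ≤ b l := by
  induction k with
  | zero =>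
    obtain ⟨a, ha⟩ := hne
    exact ⟨id, IsBlowUpComp.id, a, ⟨a, ha, rfl⟩, fun _ _ _ hl => absurd hl (Nat.not_lt_zero _)⟩
  | succ k ih =>
    obtain ⟨Φ, hΦ, a', ha', hlt⟩ := ih
    by_cases hk : k < n
    · obtain ⟨Ψ, hΨ, a, ha, hle⟩ := exists_isBlowUpComp_lowerBound_Iic
        (hΦ.image_subset_natPoints hS) ha' (j := ⟨k, hk⟩) fun b hb l hl => hlt b hb l hl
      refine ⟨Ψ ∘ Φ, hΨ.comp hΦ, a, by rwa [Set.image_comp], ?_⟩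
      rw [Set.image_comp]
      exact fun b hb l hl => hle b hb l (Fin.le_def.2 (Nat.lt_succ_iff.1 hl))
    · exact ⟨Φ, hΦ, a', ha', fun b hb l _ => hlt b hb l (l.isLt.trans_le (not_lt.1 hk))⟩

lemma exists_isBlowUpComp_isLeast_image {S : Set (Fin n → ℝ)} (hne : S.Nonempty)
    (hS : S ⊆ natPoints n) : ∃ Φ, IsBlowUpComp n Φ ∧ ∃ a, IsLeast (Φ '' S) a := by
  obtain ⟨Φ, hΦ, a, ha, hle⟩ := exists_isBlowUpComp_lowerBound_lt hne hS n
  exact ⟨Φ, hΦ, a, ha, fun b hb l => hle b hb l l.isLt⟩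

lemma exists_isBlowUpComp_forall_isLeast_image {r : ℕ} (Λ : Fin r → Set (Fin n → ℝ))
    (hne : ∀ t, (Λ t).Nonempty) (hΛ : ∀ t, Λ t ⊆ natPoints n) :
    ∃ Φ, IsBlowUpComp n Φ ∧ ∀ t, ∃ a, IsLeast (Φ '' Λ t) a := by
  induction r with
  | zero => exact ⟨id, IsBlowUpComp.id, fun t => t.elim0⟩
  | succ r ih =>
    obtain ⟨Φ, hΦ, hleast⟩ := ih (fun t => Λ t.castSucc) (fun t => hne _) (fun t => hΛ _)
    obtain ⟨Ψ, hΨ, a, ha⟩ := exists_isBlowUpComp_isLeast_image ((hne (Fin.last r)).image Φ)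
      (hΦ.image_subset_natPoints (hΛ _))
    refine ⟨Ψ ∘ Φ, hΨ.comp hΦ, Fin.lastCases ⟨a, by rwa [Set.image_comp]⟩ fun t => ?_⟩
    obtain ⟨b, hb⟩ := hleast t
    exact ⟨Ψ b, by rw [Set.image_comp]; exact hΨ.monotone.map_isLeast hb⟩

theorem exists_blowUpComp_translate_finitely_many_general (n : ℕ)
    (r : ℕ) (Λ : Fin r → Set (Fin n → ℝ)) (hne : ∀ t, (Λ t).Nonempty)
    (hΛ : ∀ t, ∀ v ∈ Λ t, ∀ l : Fin n, ∃ a : ℕ, v l = (a : ℝ)) :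
    ∃ Φ : (Fin n → ℝ) → (Fin n → ℝ), IsBlowUpComp n Φ ∧
      ∀ t : Fin r, ∃ a ∈ Φ '' (Λ t), (∀ l : Fin n, ∃ z : ℤ, a l = (z : ℝ)) ∧
        ∀ b ∈ Φ '' (Λ t), ∀ l : Fin n, ∃ c : ℕ, b l = a l + (c : ℝ) := by
  obtain ⟨Φ, hΦ, hleast⟩ := exists_isBlowUpComp_forall_isLeast_image Λ hne hΛ
  refine ⟨Φ, hΦ, fun t => ?_⟩
  obtain ⟨a, ha, hab⟩ := hleast t
  have hnat := hΦ.image_subset_natPoints (hΛ t)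
  refine ⟨a, ha, fun l => ?_,
    fun b hb => exists_eq_add_natCast_of_le (hnat ha) (hnat hb) (hab hb)⟩
  obtain ⟨m, hm⟩ := hnat ha l
  exact ⟨m, by rw [hm, Int.cast_natCast]⟩

/-- **(Corollary `2808052`).**  Let `n ≥ 2` and let `Λ₁, …, Λ_r` be finitely many non-empty
subsets of `ℤ_{≥0}^n`.  Then there exist a single finite composition `Φ` of order-preserving
monomial blowing-ups of `ℝ^n` and vectors `aᵢ ∈ Φ(Λᵢ)` such that `Φ(Λᵢ) ⊆ aᵢ + ℤ_{≥0}^n`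
for every `i`. -/
theorem exists_blowUpComp_translate_finitely_many (n : ℕ) (hn : 2 ≤ n)
    (r : ℕ) (Λ : Fin r → Set (Fin n → ℝ)) (hne : ∀ t, (Λ t).Nonempty)
    (hΛ : ∀ t, ∀ v ∈ Λ t, ∀ l : Fin n, ∃ a : ℕ, v l = (a : ℝ)) :
    ∃ Φ : (Fin n → ℝ) → (Fin n → ℝ), IsBlowUpComp n Φ ∧
      ∀ t : Fin r, ∃ a ∈ Φ '' (Λ t), (∀ l : Fin n, ∃ z : ℤ, a l = (z : ℝ)) ∧
        ∀ b ∈ Φ '' (Λ t), ∀ l : Fin n, ∃ c : ℕ, b l = a l + (c : ℝ) :=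
  exists_blowUpComp_translate_finitely_many_general n r Λ hne hΛ
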